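/- arXiv:2505.02688 — 4 statements merged into one kernel-verified Lean document; each statement's English description precedes it below -/
import Mathlib

section
/- Unbiasedness of the sample-wise backward scheme (Proposition prop_exp_equiv): For every deterministic control u ∈ ℝ^N, the sample-wise scheme and the discrete BSDE scheme satisfy, almost surely, E[Y^u_n | ℱ_n] = Y^{N,u}_n for all 0 ≤ n ≤ N and E[Z^u_n | ℱ_n] = Z^{N,u}_n for all 0 ≤ n ≤ N−1; in particular E[Y^u_n] = E[Y^{N,u}_n] and E[Z^u_n] = E[Z^{N,u}_n]. -/
/-!
The proof is the tower property plus taking out what is known. The sample-wise scheme is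
`Y^u_n = g_n Y^u_{n+1} + c_n` with `ℱ_n`-measurable `g_n = 1 + h β(X^u_n, u_n)` and
`c_n = h φ(X^u_n, u_n)`, so conditioning on `ℱ_{n+1}` first and using, backwards in `n`,
`E[Y^u_{n+1} | ℱ_{n+1}] = Y^{N,u}_{n+1}` gives `E[Y^u_n | ℱ_n] = E[g_n Y^{N,u}_{n+1} | ℱ_n] + c_n`.
The same argument with the `ℱ_{n+1}`-measurable factor `ΔW_n` handles `Z`. Gaussian increments
are square integrable, hence so is the whole Euler scheme, and every product involved is
integrable.
-/

open MeasureTheory ProbabilityTheory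
open scoped ENNReal

section Filtration

variable {Ω β : Type*} {mΩ : MeasurableSpace Ω} {mβ : MeasurableSpace β} {W : ℕ → Ω → β}

lemma monotone_iSup_comap_range :
    Monotone fun n => ⨆ i ∈ Finset.range n, MeasurableSpace.comap (W i) mβ := fun _ _ hmn =>
  biSup_mono fun _ hi => Finset.mem_range.2 ((Finset.mem_range.1 hi).trans_le hmn)

lemma iSup_comap_range_le (hW : ∀ i, Measurable (W i)) (n : ℕ) :
    ⨆ i ∈ Finset.range n, MeasurableSpace.comap (W i) mβ ≤ mΩ :=
  iSup₂_le fun i _ => (hW i).comap_le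

lemma measurable_iSup_comap_range {i n : ℕ} (hi : i < n) :
    Measurable[⨆ j ∈ Finset.range n, MeasurableSpace.comap (W j) mβ] (W i) :=
  measurable_iff_comap_le.2 (le_iSup₂_of_le i (Finset.mem_range.2 hi) le_rfl)

end Filtration

lemma continuous_of_abs_sub_le {f : ℝ → ℝ} {L : ℝ} (hf : ∀ x y, |f x - f y| ≤ L * |x - y|) :
    Continuous f :=
  (LipschitzWith.of_dist_le' fun x y => by simpa only [Real.dist_eq] using hf x y).continuous

lemma continuous_left_of_abs_sub_le {f : ℝ → ℝ → ℝ} {L : ℝ}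
    (hf : ∀ x y u v, |f x u - f y v| ≤ L * (|x - y| + |u - v|)) (v : ℝ) :
    Continuous (f · v) :=
  continuous_of_abs_sub_le fun x y => by
    simpa only [sub_self, abs_zero, add_zero] using hf x y v v

lemma memLp_comp_of_abs_le_mul_one_add_abs {Ω : Type*} {mΩ : MeasurableSpace Ω}
    {μ : Measure Ω} [IsFiniteMeasure μ] {p : ℝ≥0∞} {Y : Ω → ℝ} (hY : MemLp Y p μ) {f : ℝ → ℝ}
    (hf : Continuous f) {C : ℝ} (hfC : ∀ x, |f x| ≤ C * (1 + |x|)) :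
    MemLp (fun ω => f (Y ω)) p μ := by
  have hbound : MemLp (fun ω => |C| * (1 + ‖Y ω‖)) p μ :=
    ((memLp_const (1 : ℝ)).add hY.norm).const_mul |C|
  refine hbound.of_le (hf.comp_aestronglyMeasurable hY.1)
    (Filter.Eventually.of_forall fun ω => ?_)
  simp only [Real.norm_eq_abs]
  rw [abs_of_nonneg (by positivity : 0 ≤ |C| * (1 + |Y ω|))]
  exact (hfC (Y ω)).trans (mul_le_mul_of_nonneg_right (le_abs_self C) (by positivity))

section Euler

variable {Ω : Type*} {mΩ : MeasurableSpace Ω} {ΔW X : ℕ → Ω → ℝ}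
  {b : ℝ → ℝ → ℝ} {σ : ℝ → ℝ} {u : ℕ → ℝ} {h x₀ : ℝ}

lemma measurable_euler {F : ℕ → MeasurableSpace Ω} (hF : Monotone F)
    (hW : ∀ n, Measurable[F (n + 1)] (ΔW n)) (hb : ∀ v, Continuous (b · v))
    (hX0 : X 0 = fun _ => x₀)
    (hXrec : ∀ n, X (n + 1) = fun ω => X n ω + b (X n ω) (u n) * h + σ (u n) * ΔW n ω)
    (n : ℕ) : Measurable[F n] (X n) := by
  induction n with
  | zero => rw [hX0]; exact measurable_const
  | succ n ih =>
    have hXn : Measurable[F (n + 1)] (X n) := ih.mono (hF n.le_succ) le_rfl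
    rw [hXrec n]
    exact (hXn.add (((hb (u n)).measurable.comp hXn).mul_const h)).add ((hW n).const_mul _)

lemma memLp_euler {μ : Measure Ω} [IsFiniteMeasure μ] {p : ℝ≥0∞} {L : ℝ} {N : ℕ}
    (hb : ∀ v, Continuous (b · v))
    (hbgrow : ∀ x v, |b x v| ≤ L * (1 + |x|)) (hW : ∀ n < N, MemLp (ΔW n) p μ)
    (hX0 : X 0 = fun _ => x₀)
    (hXrec : ∀ n, X (n + 1) = fun ω => X n ω + b (X n ω) (u n) * h + σ (u n) * ΔW n ω) :
    ∀ n ≤ N, MemLp (X n) p μ := by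
  intro n
  induction n with
  | zero => intro _; rw [hX0]; exact memLp_const x₀
  | succ n ih =>
    intro hn
    have hXn : MemLp (X n) p μ := ih (Nat.le_of_succ_le hn)
    have hdrift : MemLp (fun ω => b (X n ω) (u n) * h) p μ :=
      memLp_comp_of_abs_le_mul_one_add_abs hXn (f := fun x => b x (u n) * h)
        ((hb (u n)).mul continuous_const) (C := L * |h|)
        fun x => by rw [abs_mul, mul_right_comm]; gcongr; exact hbgrow _ _
    rw [hXrec n]
    exact (hXn.add hdrift).add ((hW n hn).const_mul _)

end Euler

section Backward

variable {Ω : Type*} {mΩ : MeasurableSpace Ω} {μ : Measure Ω} {N : ℕ} {Y g c : ℕ → Ω → ℝ}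

lemma memLp_of_backward_recursion {p : ℝ≥0∞} (hYN : MemLp (Y N) p μ)
    (hg : ∀ n < N, MemLp (g n) ∞ μ) (hc : ∀ n < N, MemLp (c n) p μ)
    (hY : ∀ n < N, Y n = g n * Y (n + 1) + c n) {n : ℕ} (hn : n ≤ N) : MemLp (Y n) p μ := by
  induction hn using Nat.decreasingInduction with
  | self => exact hYN
  | of_succ n hn ih => rw [hY n hn]; exact (ih.mul (hg n hn)).add (hc n hn)

variable [IsFiniteMeasure μ]

lemma condExp_mul_ae_eq_of_condExp_ae_eq {m₁ m₂ : MeasurableSpace Ω} (h₁₂ : m₁ ≤ m₂)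
    (h₂ : m₂ ≤ mΩ) {f Z Z' : Ω → ℝ} (hf : StronglyMeasurable[m₂] f)
    (hfZ : Integrable (f * Z) μ) (hZ : Integrable Z μ) (hZZ' : μ[Z|m₂] =ᵐ[μ] Z') :
    μ[f * Z|m₁] =ᵐ[μ] μ[f * Z'|m₁] :=
  (condExp_condExp_of_le h₁₂ h₂).symm.trans <| condExp_congr_ae <|
    (condExp_mul_of_stronglyMeasurable_left hf hfZ hZ).trans (Filter.EventuallyEq.rfl.mul hZZ')

lemma condExp_ae_eq_of_backward_recursion {F : ℕ → MeasurableSpace Ω} (hF : Monotone F)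
    (hFle : ∀ n, F n ≤ mΩ) {Y' : ℕ → Ω → ℝ} (hYN : μ[Y N|F N] =ᵐ[μ] Y' N)
    (hYint : ∀ n ≤ N, Integrable (Y n) μ)
    (hg : ∀ n < N, StronglyMeasurable[F n] (g n) ∧ MemLp (g n) ∞ μ)
    (hc : ∀ n < N, StronglyMeasurable[F n] (c n) ∧ Integrable (c n) μ)
    (hY : ∀ n < N, Y n = g n * Y (n + 1) + c n)
    (hY' : ∀ n < N, Y' n = μ[g n * Y' (n + 1)|F n] + c n) {n : ℕ} (hn : n ≤ N) :
    μ[Y n|F n] =ᵐ[μ] Y' n := by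
  induction hn using Nat.decreasingInduction with
  | self => exact hYN
  | of_succ n hn ih =>
    have hgY : Integrable (g n * Y (n + 1)) μ := (hYint (n + 1) hn).mul_of_top_right (hg n hn).2
    rw [hY n hn, hY' n hn]
    refine (condExp_add hgY (hc n hn).2 _).trans (Filter.EventuallyEq.add ?_ ?_)
    · exact condExp_mul_ae_eq_of_condExp_ae_eq (hF n.le_succ) (hFle _)
        ((hg n hn).1.mono (hF n.le_succ)) hgY (hYint _ hn) ih
    · rw [condExp_of_stronglyMeasurable (hFle n) (hc n hn).1 (hc n hn).2]

lemma condExp_mul_div_ae_eq_of_condExp_ae_eq {m₁ m₂ : MeasurableSpace Ω} (h₁₂ : m₁ ≤ m₂)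
    (h₂ : m₂ ≤ mΩ) {W Z Z' : Ω → ℝ} (hW : StronglyMeasurable[m₂] W)
    (hZW : Integrable (fun ω => Z ω * W ω) μ) (hZ : Integrable Z μ) (hZZ' : μ[Z|m₂] =ᵐ[μ] Z')
    (h : ℝ) :
    μ[fun ω => Z ω * W ω / h|m₁] =ᵐ[μ] fun ω => μ[fun ω => Z' ω * W ω|m₁] ω / h := by
  have hcomm : ∀ Z : Ω → ℝ, (fun ω => Z ω * W ω) = W * Z := fun Z => funext fun ω => mul_comm _ _
  have hdiv : (fun ω => Z ω * W ω / h) = h⁻¹ • (W * Z) :=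
    funext fun ω => by simp only [Pi.smul_apply, Pi.mul_apply, smul_eq_mul]; ring
  rw [hdiv, hcomm]
  rw [hcomm] at hZW
  filter_upwards [condExp_smul h⁻¹ (W * Z) m₁,
    condExp_mul_ae_eq_of_condExp_ae_eq h₁₂ h₂ hW hZW hZ hZZ'] with ω hsmul hmul
  rw [hsmul, Pi.smul_apply, hmul, smul_eq_mul, div_eq_inv_mul]

lemma integral_eq_of_condExp_ae_eq {m : MeasurableSpace Ω} (hm : m ≤ mΩ) {f f' : Ω → ℝ}
    (hff' : μ[f|m] =ᵐ[μ] f') : ∫ ω, f ω ∂μ = ∫ ω, f' ω ∂μ :=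
  (integral_condExp hm).symm.trans (integral_congr_ae hff')

end Backward

theorem samplewise_scheme_unbiased_general
    {Ω : Type*} {mΩ : MeasurableSpace Ω} (μ : Measure Ω) [IsProbabilityMeasure μ]
    (L : ℝ)
    (N : ℕ) (h : ℝ)
    (ΔW : ℕ → Ω → ℝ)
    (hmeas : ∀ i, Measurable (ΔW i))
    (hlaw : ∀ i : Fin N, Measure.map (ΔW i) μ = gaussianReal 0 (Real.toNNReal h))
    (F : ℕ → MeasurableSpace Ω)
    (hF : ∀ n, F n = ⨆ i ∈ Finset.range n,
      MeasurableSpace.comap (ΔW i) (inferInstance : MeasurableSpace ℝ))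
    (b : ℝ → ℝ → ℝ)
    (hb : ∀ x y u v : ℝ, |b x u - b y v| ≤ L * (|x - y| + |u - v|))
    (σ : ℝ → ℝ)
    (β φ : ℝ → ℝ → ℝ) (ψ : ℝ → ℝ)
    (hβ : ∀ x y u v : ℝ, |β x u - β y v| ≤ L * (|x - y| + |u - v|))
    (hφ : ∀ x y u v : ℝ, |φ x u - φ y v| ≤ L * (|x - y| + |u - v|))
    (hψ : ∀ x y : ℝ, |ψ x - ψ y| ≤ L * |x - y|)
    (hβbd : ∀ x u : ℝ, |β x u| ≤ L)
    (hbgrow : ∀ x u : ℝ, |b x u| ≤ L * (1 + |x|))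
    (hφgrow : ∀ x u : ℝ, |φ x u| ≤ L * (1 + |x|))
    (hψgrow : ∀ x : ℝ, |ψ x| ≤ L * (1 + |x|))
    (x₀ : ℝ) (u : ℕ → ℝ) (X : ℕ → Ω → ℝ)
    (hX0 : X 0 = fun _ => x₀)
    (hXrec : ∀ n, X (n + 1) = fun ω => X n ω + b (X n ω) (u n) * h + σ (u n) * ΔW n ω)
    -- discrete BSDE scheme
    (Yd Zd : ℕ → Ω → ℝ)
    (hYdN : Yd N = fun ω => ψ (X N ω))
    (hYd : ∀ n < N, Yd n = fun ω =>
      (μ[fun ω' => (1 + h * β (X n ω') (u n)) * Yd (n + 1) ω' | F n]) ω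
        + h * φ (X n ω) (u n))
    (hZd : ∀ n < N, Zd n = fun ω => (μ[fun ω' => Yd (n + 1) ω' * ΔW n ω' | F n]) ω / h)
    -- sample-wise scheme
    (Ys Zs : ℕ → Ω → ℝ)
    (hYsN : Ys N = fun ω => ψ (X N ω))
    (hYs : ∀ n < N, Ys n = fun ω =>
      (1 + h * β (X n ω) (u n)) * Ys (n + 1) ω + h * φ (X n ω) (u n))
    (hZs : ∀ n < N, Zs n = fun ω => Ys (n + 1) ω * ΔW n ω / h) :
    (∀ n ≤ N, μ[Ys n | F n] =ᵐ[μ] Yd n) ∧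
    (∀ n < N, μ[Zs n | F n] =ᵐ[μ] Zd n) ∧
    (∀ n ≤ N, ∫ ω, Ys n ω ∂μ = ∫ ω, Yd n ω ∂μ) ∧
    (∀ n < N, ∫ ω, Zs n ω ∂μ = ∫ ω, Zd n ω ∂μ) := by
  have hFmono : Monotone F := funext hF ▸ monotone_iSup_comap_range
  have hFle (n : ℕ) : F n ≤ mΩ := hF n ▸ iSup_comap_range_le hmeas n
  have hWF (n : ℕ) : Measurable[F (n + 1)] (ΔW n) :=
    hF (n + 1) ▸ measurable_iSup_comap_range n.lt_succ_self
  have hbc := continuous_left_of_abs_sub_le hb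
  have hβc := continuous_left_of_abs_sub_le hβ
  have hφc := continuous_left_of_abs_sub_le hφ
  have hψc := continuous_of_abs_sub_le hψ
  have hXF := measurable_euler hFmono hWF hbc hX0 hXrec
  have hW2 (n : ℕ) (hn : n < N) : MemLp (ΔW n) 2 μ := by
    simpa [← hlaw ⟨n, hn⟩, memLp_map_measure_iff aestronglyMeasurable_id (hmeas n).aemeasurable]
      using memLp_id_gaussianReal (μ := 0) (v := h.toNNReal) 2
  have hX2 := memLp_euler hbc hbgrow hW2 hX0 hXrec
  set g : ℕ → Ω → ℝ := fun n ω => 1 + h * β (X n ω) (u n)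
  set c : ℕ → Ω → ℝ := fun n ω => h * φ (X n ω) (u n)
  have hgF (n : ℕ) : StronglyMeasurable[F n] (g n) :=
    (measurable_const.add (((hβc (u n)).measurable.comp (hXF n)).const_mul h)).stronglyMeasurable
  have hg (n : ℕ) : MemLp (g n) ∞ μ :=
    memLp_top_of_bound ((hgF n).mono (hFle n)).aestronglyMeasurable (1 + |h| * L) <|
      ae_of_all _ fun ω => (abs_add_le _ _).trans <| by
        rw [abs_one, abs_mul]; gcongr; exact hβbd _ _
  have hcF (n : ℕ) : StronglyMeasurable[F n] (c n) :=
    (((hφc (u n)).measurable.comp (hXF n)).const_mul h).stronglyMeasurable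
  have hc2 (n : ℕ) (hn : n ≤ N) : MemLp (c n) 2 μ :=
    memLp_comp_of_abs_le_mul_one_add_abs (hX2 n hn) (f := fun x => h * φ x (u n))
      (continuous_const.mul (hφc (u n))) (C := |h| * L)
      fun x => by rw [abs_mul, mul_assoc]; gcongr; exact hφgrow _ _
  have hYsNF : StronglyMeasurable[F N] (Ys N) :=
    hYsN ▸ (hψc.measurable.comp (hXF N)).stronglyMeasurable
  have hYsN2 : MemLp (Ys N) 2 μ :=
    hYsN ▸ memLp_comp_of_abs_le_mul_one_add_abs (hX2 N le_rfl) hψc hψgrow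
  have hYs2 (n : ℕ) (hn : n ≤ N) : MemLp (Ys n) 2 μ :=
    memLp_of_backward_recursion hYsN2 (fun n _ => hg n) (fun n hn => hc2 n hn.le) hYs hn
  have hY (n : ℕ) (hn : n ≤ N) : μ[Ys n | F n] =ᵐ[μ] Yd n := by
    refine condExp_ae_eq_of_backward_recursion hFmono hFle ?_
      (fun n hn => (hYs2 n hn).integrable one_le_two) (fun n _ => ⟨hgF n, hg n⟩)
      (fun n hn => ⟨hcF n, (hc2 n hn.le).integrable one_le_two⟩) hYs hYd hn
    rw [condExp_of_stronglyMeasurable (hFle N) hYsNF (hYsN2.integrable one_le_two), hYsN, hYdN]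
  have hZ (n : ℕ) (hn : n < N) : μ[Zs n | F n] =ᵐ[μ] Zd n := by
    rw [hZs n hn, hZd n hn]
    exact condExp_mul_div_ae_eq_of_condExp_ae_eq (hFmono n.le_succ) (hFle _)
      (hWF n).stronglyMeasurable ((hYs2 (n + 1) hn).integrable_mul (hW2 n hn))
      ((hYs2 (n + 1) hn).integrable one_le_two) (hY (n + 1) hn) h
  exact ⟨hY, hZ, fun n hn => integral_eq_of_condExp_ae_eq (hFle n) (hY n hn),
    fun n hn => integral_eq_of_condExp_ae_eq (hFle n) (hZ n hn)⟩

/-- Unbiasedness of the sample-wise backward scheme: the conditional expectation of the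
sample-wise scheme `(Y^u_n, Z^u_n)` given `ℱ_n` coincides (a.s.) with the discrete BSDE scheme
`(Y^{N,u}_n, Z^{N,u}_n)`; in particular their expectations agree. -/
theorem samplewise_scheme_unbiased
    {Ω : Type*} {mΩ : MeasurableSpace Ω} (μ : Measure Ω) [IsProbabilityMeasure μ]
    (T L : ℝ) (hT : 0 < T) (hL : 0 < L)
    (N : ℕ) (hN : 1 ≤ N) (h : ℝ) (hh : h = T / N)
    (ΔW : ℕ → Ω → ℝ)
    (hmeas : ∀ i, Measurable (ΔW i))
    (hindep : iIndepFun (fun i : Fin N => ΔW i) μ)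
    (hlaw : ∀ i : Fin N, Measure.map (ΔW i) μ = gaussianReal 0 (Real.toNNReal h))
    (F : ℕ → MeasurableSpace Ω)
    (hF : ∀ n, F n = ⨆ i ∈ Finset.range n,
      MeasurableSpace.comap (ΔW i) (inferInstance : MeasurableSpace ℝ))
    (b : ℝ → ℝ → ℝ)
    (hb : ∀ x y u v : ℝ, |b x u - b y v| ≤ L * (|x - y| + |u - v|))
    (σ : ℝ → ℝ)
    (hσ : ∀ u v : ℝ, |σ u - σ v| ≤ L * |u - v|)
    (β φ : ℝ → ℝ → ℝ) (ψ : ℝ → ℝ)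
    (hβ : ∀ x y u v : ℝ, |β x u - β y v| ≤ L * (|x - y| + |u - v|))
    (hφ : ∀ x y u v : ℝ, |φ x u - φ y v| ≤ L * (|x - y| + |u - v|))
    (hψ : ∀ x y : ℝ, |ψ x - ψ y| ≤ L * |x - y|)
    (hβbd : ∀ x u : ℝ, |β x u| ≤ L)
    (hbgrow : ∀ x u : ℝ, |b x u| ≤ L * (1 + |x|))
    (hφgrow : ∀ x u : ℝ, |φ x u| ≤ L * (1 + |x|))
    (hψgrow : ∀ x : ℝ, |ψ x| ≤ L * (1 + |x|))
    (x₀ : ℝ) (u : ℕ → ℝ) (X : ℕ → Ω → ℝ)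
    (hX0 : X 0 = fun _ => x₀)
    (hXrec : ∀ n, X (n + 1) = fun ω => X n ω + b (X n ω) (u n) * h + σ (u n) * ΔW n ω)
    -- discrete BSDE scheme
    (Yd Zd : ℕ → Ω → ℝ)
    (hYdN : Yd N = fun ω => ψ (X N ω))
    (hYd : ∀ n < N, Yd n = fun ω =>
      (μ[fun ω' => (1 + h * β (X n ω') (u n)) * Yd (n + 1) ω' | F n]) ω
        + h * φ (X n ω) (u n))
    (hZd : ∀ n < N, Zd n = fun ω => (μ[fun ω' => Yd (n + 1) ω' * ΔW n ω' | F n]) ω / h)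
    -- sample-wise scheme
    (Ys Zs : ℕ → Ω → ℝ)
    (hYsN : Ys N = fun ω => ψ (X N ω))
    (hYs : ∀ n < N, Ys n = fun ω =>
      (1 + h * β (X n ω) (u n)) * Ys (n + 1) ω + h * φ (X n ω) (u n))
    (hZs : ∀ n < N, Zs n = fun ω => Ys (n + 1) ω * ΔW n ω / h) :
    (∀ n ≤ N, μ[Ys n | F n] =ᵐ[μ] Yd n) ∧
    (∀ n < N, μ[Zs n | F n] =ᵐ[μ] Zd n) ∧
    (∀ n ≤ N, ∫ ω, Ys n ω ∂μ = ∫ ω, Yd n ω ∂μ) ∧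
    (∀ n < N, ∫ ω, Zs n ω ∂μ = ∫ ω, Zd n ω ∂μ) :=
  samplewise_scheme_unbiased_general (mΩ := mΩ) μ L N h ΔW hmeas hlaw F hF b hb σ β φ ψ hβ hφ hψ
    hβbd hbgrow hφgrow hψgrow x₀ u X hX0 hXrec Yd Zd hYdN hYd hZd Ys Zs hYsN hYs hZs
end

section
/- Weighted unbiasedness of the sample-wise scheme (used in the proof of the damped contraction theorem): For every deterministic control u ∈ ℝ^N, every 0 ≤ n ≤ N−1, and every bounded ℱ_n-measurable real random variable A, one has E[A · Y^u_n] = E[A · Y^{N,u}_n] and E[A · Z^u_n] = E[A · Z^{N,u}_n]. -/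
open MeasureTheory ProbabilityTheory

/-!
Both schemes obey the same affine backward recursion `Y n = B n * Y (n + 1) + C n` with the
bounded multiplier `B n = 1 + h β(X n, u n)`, except that the discrete scheme conditions on
`ℱ n` at every step. Against an `ℱ n`-measurable square-integrable weight `A` this conditioning
is invisible, and the multiplier can be moved onto the weight, `A * B n` being
`ℱ (n + 1)`-measurable and still square-integrable; so `E[A Y^u_n] = E[A Y^{N,u}_n]` follows by
backward induction on `n`. The identity for `Z` is the identity for `Y` at time `n + 1` with the
weight `A ΔW_n`. Square-integrability of everything involved comes from the linear growth of
`b`, `φ`, `ψ` and the Gaussian moments of the increments.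
-/

section WeightedIntegrals

variable {Ω : Type*} {m0 : MeasurableSpace Ω} {μ : Measure Ω}

lemma measurable_left_of_abs_sub_le {f : ℝ → ℝ → ℝ} {K : ℝ}
    (hf : ∀ x y u v, |f x u - f y v| ≤ K * (|x - y| + |u - v|)) (v : ℝ) :
    Measurable (f · v) :=
  (LipschitzWith.of_dist_le' fun x y => by
    simpa [Real.dist_eq] using hf x y v v).continuous.measurable

lemma MeasureTheory.MemLp.comp_of_abs_le_linear [IsFiniteMeasure μ] {p : ENNReal}
    {X : Ω → ℝ} {f : ℝ → ℝ} {K : ℝ} (hX : MemLp X p μ) (hf : AEStronglyMeasurable (fun ω => f (X ω)) μ)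
    (hgrow : ∀ x, |f x| ≤ K * (1 + |x|)) : MemLp (fun ω => f (X ω)) p μ :=
  ((memLp_const (1 : ℝ)).add hX.norm).of_le_mul hf <| ae_of_all _ fun ω => by
    have hpos : (0 : ℝ) ≤ 1 + |X ω| := by positivity
    simp only [Pi.add_apply, Real.norm_eq_abs, abs_of_nonneg hpos]
    exact hgrow (X ω)

lemma memLp_of_map_eq_gaussianReal {X : Ω → ℝ} (hX : Measurable X) {m : ℝ} {v : NNReal}
    (hlaw : μ.map X = gaussianReal m v) {p : ENNReal} (hp : p ≠ ⊤) : MemLp X p μ := by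
  have := (memLp_id_gaussianReal' (μ := m) (v := v) p hp)
  rw [← hlaw] at this
  exact this.comp_of_map hX.aemeasurable

lemma integral_mul_condExp_of_stronglyMeasurable {m : MeasurableSpace Ω} (hm : m ≤ m0)
    [SigmaFinite (μ.trim hm)] {A G : Ω → ℝ} (hA : StronglyMeasurable[m] A)
    (hAG : Integrable (A * G) μ) (hG : Integrable G μ) :
    ∫ ω, A ω * μ[G | m] ω ∂μ = ∫ ω, A ω * G ω ∂μ :=
  calc ∫ ω, A ω * μ[G | m] ω ∂μ = ∫ ω, μ[A * G | m] ω ∂μ :=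
        integral_congr_ae (condExp_mul_of_stronglyMeasurable_left hA hAG hG).symm
    _ = ∫ ω, A ω * G ω ∂μ := integral_condExp hm

lemma integral_mul_increment_eq_of_forall_integral_mul_eq [IsFiniteMeasure μ]
    {m m' : MeasurableSpace Ω} (hm : m ≤ m') (hm' : m' ≤ m0) {Ys Yd A W : Ω → ℝ}
    (hYd : MemLp Yd 2 μ)
    (hY : ∀ A' : Ω → ℝ, Measurable[m'] A' → MemLp A' 2 μ →
      ∫ ω, A' ω * Ys ω ∂μ = ∫ ω, A' ω * Yd ω ∂μ)
    (hA : Measurable[m] A) (hA' : MemLp A ⊤ μ) (hW : Measurable[m'] W) (hW2 : MemLp W 2 μ)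
    (h : ℝ) :
    ∫ ω, A ω * (Ys ω * W ω / h) ∂μ = ∫ ω, A ω * (μ[Yd * W | m] ω / h) ∂μ := by
  have hAW : MemLp (A * W) 2 μ := hW2.mul hA'
  have hweighted := hY _ ((hA.mono hm le_rfl).mul hW) hAW
  have hAYW : A * (Yd * W) = A * W * Yd := by ring
  have hpull := integral_mul_condExp_of_stronglyMeasurable (hm.trans hm') hA.stronglyMeasurable
    (hAYW ▸ hAW.integrable_mul hYd) (hYd.integrable_mul hW2)
  simp only [Pi.mul_apply] at hweighted hpull
  simp only [mul_div_assoc', integral_div, hpull]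
  have hcomm (Y : Ω → ℝ) : ∫ ω, A ω * (Y ω * W ω) ∂μ = ∫ ω, A ω * W ω * Y ω ∂μ :=
    integral_congr_ae (ae_of_all _ fun ω => by ring)
  rw [hcomm, hcomm, hweighted]

end WeightedIntegrals

section BackwardRecursion

variable {Ω : Type*} {m0 : MeasurableSpace Ω} {μ : Measure Ω}
  {ℱ : Filtration ℕ m0} {N : ℕ} {B C Ys Yd : ℕ → Ω → ℝ}

lemma memLp_samplewise_recursion (hB : ∀ n < N, MemLp (B n) ⊤ μ)
    (hC : ∀ n < N, MemLp (C n) 2 μ) (hYN : MemLp (Ys N) 2 μ)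
    (hYs : ∀ n < N, Ys n = B n * Ys (n + 1) + C n) {n : ℕ} (hn : n ≤ N) :
    MemLp (Ys n) 2 μ := by
  induction hn using Nat.decreasingInduction with
  | self => exact hYN
  | of_succ k hk ih => rw [hYs k hk]; exact (ih.mul (hB k hk)).add (hC k hk)

lemma memLp_condExp_recursion (hB : ∀ n < N, MemLp (B n) ⊤ μ)
    (hC : ∀ n < N, MemLp (C n) 2 μ) (hYN : MemLp (Yd N) 2 μ)
    (hYd : ∀ n < N, Yd n = μ[B n * Yd (n + 1) | ℱ n] + C n) {n : ℕ} (hn : n ≤ N) :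
    MemLp (Yd n) 2 μ := by
  induction hn using Nat.decreasingInduction with
  | self => exact hYN
  | of_succ k hk ih =>
    rw [hYd k hk]; exact ((ih.mul (hB k hk)).condExp one_le_two).add (hC k hk)

theorem integral_mul_samplewise_eq_integral_mul_condExp [IsFiniteMeasure μ]
    (hB : ∀ n < N, Measurable[ℱ (n + 1)] (B n)) (hB' : ∀ n < N, MemLp (B n) ⊤ μ)
    (hC : ∀ n < N, MemLp (C n) 2 μ) (hYN : MemLp (Yd N) 2 μ) (hYsN : Ys N = Yd N)
    (hYs : ∀ n < N, Ys n = B n * Ys (n + 1) + C n)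
    (hYd : ∀ n < N, Yd n = μ[B n * Yd (n + 1) | ℱ n] + C n) {n : ℕ} (hn : n ≤ N) {A : Ω → ℝ}
    (hA : Measurable[ℱ n] A) (hA2 : MemLp A 2 μ) :
    ∫ ω, A ω * Ys n ω ∂μ = ∫ ω, A ω * Yd n ω ∂μ := by
  induction hn using Nat.decreasingInduction generalizing A with
  | self => rw [hYsN]
  | of_succ k hk ih =>
    have hYs2 := memLp_samplewise_recursion hB' hC (hYsN ▸ hYN) hYs hk
    have hYd2 := memLp_condExp_recursion hB' hC hYN hYd hk
    have hAB : MemLp (A * B k) 2 μ := (hB' k hk).mul hA2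
    have hih := ih ((hA.mono (ℱ.mono k.le_succ) le_rfl).mul (hB k hk)) hAB
    have hAC : Integrable (A * C k) μ := hA2.integrable_mul (hC k hk)
    have hYsk : A * Ys k = A * B k * Ys (k + 1) + A * C k := by rw [hYs k hk]; ring
    have hYdk : A * Yd k = A * μ[B k * Yd (k + 1) | ℱ k] + A * C k := by rw [hYd k hk]; ring
    have hBYd : MemLp (B k * Yd (k + 1)) 2 μ := hYd2.mul (hB' k hk)
    have hpull := integral_mul_condExp_of_stronglyMeasurable (ℱ.le k) hA.stronglyMeasurable
      (hA2.integrable_mul hBYd) (hBYd.integrable one_le_two)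
    calc ∫ ω, (A * Ys k) ω ∂μ
        = ∫ ω, (A * B k * Ys (k + 1)) ω ∂μ + ∫ ω, (A * C k) ω ∂μ := by
          rw [hYsk, integral_add' (hAB.integrable_mul hYs2) hAC]
      _ = ∫ ω, (A * μ[B k * Yd (k + 1) | ℱ k]) ω ∂μ + ∫ ω, (A * C k) ω ∂μ := by
          simp only [Pi.mul_apply, mul_assoc] at hih hpull ⊢
          rw [hih, hpull]
      _ = ∫ ω, (A * Yd k) ω ∂μ := by
          rw [hYdk, integral_add' (hA2.integrable_mul (hBYd.condExp one_le_two)) hAC]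

theorem integral_mul_samplewise_eq_and_increment_eq [IsFiniteMeasure μ]
    (hB : ∀ n < N, Measurable[ℱ (n + 1)] (B n)) (hB' : ∀ n < N, MemLp (B n) ⊤ μ)
    (hC : ∀ n < N, MemLp (C n) 2 μ) (hYN : MemLp (Yd N) 2 μ) (hYsN : Ys N = Yd N)
    (hYs : ∀ n < N, Ys n = B n * Ys (n + 1) + C n)
    (hYd : ∀ n < N, Yd n = μ[B n * Yd (n + 1) | ℱ n] + C n)
    {W : ℕ → Ω → ℝ} (hW : ∀ n, Measurable[ℱ (n + 1)] (W n)) (hW2 : ∀ n < N, MemLp (W n) 2 μ)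
    {h : ℝ} {Zs Zd : ℕ → Ω → ℝ} (hZs : ∀ n < N, Zs n = fun ω => Ys (n + 1) ω * W n ω / h)
    (hZd : ∀ n < N, Zd n = fun ω => μ[Yd (n + 1) * W n | ℱ n] ω / h) :
    ∀ n < N, ∀ A : Ω → ℝ, Measurable[ℱ n] A → (∃ c : ℝ, ∀ ω, |A ω| ≤ c) →
      (∫ ω, A ω * Ys n ω ∂μ = ∫ ω, A ω * Yd n ω ∂μ) ∧
      (∫ ω, A ω * Zs n ω ∂μ = ∫ ω, A ω * Zd n ω ∂μ) := by
  have hweighted (k : ℕ) (hk : k ≤ N) (A : Ω → ℝ) (hA : Measurable[ℱ k] A)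
      (hA2 : MemLp A 2 μ) : ∫ ω, A ω * Ys k ω ∂μ = ∫ ω, A ω * Yd k ω ∂μ :=
    integral_mul_samplewise_eq_integral_mul_condExp hB hB' hC hYN hYsN hYs hYd hk hA hA2
  intro n hn A hA ⟨c, hc⟩
  have hA' : MemLp A ⊤ μ :=
    memLp_top_of_bound (hA.mono (ℱ.le n) le_rfl).aestronglyMeasurable c (ae_of_all _ hc)
  refine ⟨hweighted n hn.le A hA (hA'.mono_exponent le_top), ?_⟩
  rw [hZs n hn, hZd n hn]
  exact integral_mul_increment_eq_of_forall_integral_mul_eq (ℱ.mono n.le_succ) (ℱ.le _)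
    (memLp_condExp_recursion hB' hC hYN hYd hn) (hweighted (n + 1) hn) hA hA' (hW n) (hW2 n hn) h

end BackwardRecursion

section EulerScheme

variable {Ω : Type*} {m0 : MeasurableSpace Ω} {μ : Measure Ω} {X W : ℕ → Ω → ℝ}
  {a : ℕ → ℝ → ℝ} {c : ℕ → ℝ} {x₀ : ℝ}

lemma adapted_euler {ℱ : Filtration ℕ m0} (hW : ∀ n, Measurable[ℱ (n + 1)] (W n))
    (ha : ∀ n, Measurable (a n)) (hX0 : X 0 = fun _ => x₀)
    (hXrec : ∀ n, X (n + 1) = fun ω => X n ω + a n (X n ω) + c n * W n ω) :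
    Adapted ℱ X := by
  intro n
  induction n with
  | zero => rw [hX0]; exact measurable_const
  | succ n ih =>
    have hXn : Measurable[ℱ (n + 1)] (X n) := ih.mono (ℱ.mono n.le_succ) le_rfl
    rw [hXrec n]
    exact (hXn.add ((ha n).comp hXn)).add ((hW n).const_mul (c n))

lemma memLp_euler_s3 [IsFiniteMeasure μ] {p : ENNReal} {N : ℕ} {K : ℝ}
    (hX : ∀ n, Measurable (X n)) (ha : ∀ n, Measurable (a n))
    (hgrow : ∀ n x, |a n x| ≤ K * (1 + |x|)) (hW : ∀ n < N, MemLp (W n) p μ)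
    (hX0 : X 0 = fun _ => x₀)
    (hXrec : ∀ n, X (n + 1) = fun ω => X n ω + a n (X n ω) + c n * W n ω) {n : ℕ}
    (hn : n ≤ N) : MemLp (X n) p μ := by
  induction n with
  | zero => rw [hX0]; exact memLp_const x₀
  | succ n ih =>
    have hXn := ih (by omega)
    rw [hXrec n]
    exact (hXn.add (hXn.comp_of_abs_le_linear ((ha n).comp (hX n)).aestronglyMeasurable
      (hgrow n))).add ((hW n (by omega)).const_mul (c n))

end EulerScheme

section PastFiltration

variable {Ω β : Type*} {m0 : MeasurableSpace Ω} [MeasurableSpace β] {W : ℕ → Ω → β}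

def pastFiltration (W : ℕ → Ω → β) (hW : ∀ i, Measurable (W i)) : Filtration ℕ m0 where
  seq n := ⨆ i ∈ Finset.range n, MeasurableSpace.comap (W i) inferInstance
  mono' _ _ hnm := biSup_mono fun _ hi =>
    Finset.mem_range.2 ((Finset.mem_range.1 hi).trans_le hnm)
  le' _ := iSup₂_le fun i _ => (hW i).comap_le

lemma measurable_pastFiltration_succ (hW : ∀ i, Measurable (W i)) (i : ℕ) :
    Measurable[pastFiltration W hW (i + 1)] (W i) :=
  measurable_iff_comap_le.2 <| le_iSup₂ (f := fun j (_ : j ∈ Finset.range (i + 1)) =>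
    MeasurableSpace.comap (W j) inferInstance) i (Finset.mem_range.2 i.lt_succ_self)

end PastFiltration

theorem samplewise_scheme_weighted_unbiased_general
    {Ω : Type*} {mΩ : MeasurableSpace Ω} (μ : Measure Ω) [IsProbabilityMeasure μ]
    (L : ℝ)
    (N : ℕ) (h : ℝ)
    (ΔW : ℕ → Ω → ℝ)
    (hmeas : ∀ i, Measurable (ΔW i))
    (hlaw : ∀ i : Fin N, Measure.map (ΔW i) μ = gaussianReal 0 (Real.toNNReal h))
    (F : ℕ → MeasurableSpace Ω)
    (hF : ∀ n, F n = ⨆ i ∈ Finset.range n,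
      MeasurableSpace.comap (ΔW i) (inferInstance : MeasurableSpace ℝ))
    (b : ℝ → ℝ → ℝ)
    (hb : ∀ x y u v : ℝ, |b x u - b y v| ≤ L * (|x - y| + |u - v|))
    (σ : ℝ → ℝ)
    (β φ : ℝ → ℝ → ℝ) (ψ : ℝ → ℝ)
    (hβ : ∀ x y u v : ℝ, |β x u - β y v| ≤ L * (|x - y| + |u - v|))
    (hφ : ∀ x y u v : ℝ, |φ x u - φ y v| ≤ L * (|x - y| + |u - v|))
    (hψ : ∀ x y : ℝ, |ψ x - ψ y| ≤ L * |x - y|)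
    (hβbd : ∀ x u : ℝ, |β x u| ≤ L)
    (hbgrow : ∀ x u : ℝ, |b x u| ≤ L * (1 + |x|))
    (hφgrow : ∀ x u : ℝ, |φ x u| ≤ L * (1 + |x|))
    (hψgrow : ∀ x : ℝ, |ψ x| ≤ L * (1 + |x|))
    (x₀ : ℝ) (u : ℕ → ℝ) (X : ℕ → Ω → ℝ)
    (hX0 : X 0 = fun _ => x₀)
    (hXrec : ∀ n, X (n + 1) = fun ω => X n ω + b (X n ω) (u n) * h + σ (u n) * ΔW n ω)
    -- discrete BSDE scheme
    (Yd Zd : ℕ → Ω → ℝ)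
    (hYdN : Yd N = fun ω => ψ (X N ω))
    (hYd : ∀ n < N, Yd n = fun ω =>
      (μ[fun ω' => (1 + h * β (X n ω') (u n)) * Yd (n + 1) ω' | F n]) ω
        + h * φ (X n ω) (u n))
    (hZd : ∀ n < N, Zd n = fun ω => (μ[fun ω' => Yd (n + 1) ω' * ΔW n ω' | F n]) ω / h)
    -- sample-wise scheme
    (Ys Zs : ℕ → Ω → ℝ)
    (hYsN : Ys N = fun ω => ψ (X N ω))
    (hYs : ∀ n < N, Ys n = fun ω =>
      (1 + h * β (X n ω) (u n)) * Ys (n + 1) ω + h * φ (X n ω) (u n))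
    (hZs : ∀ n < N, Zs n = fun ω => Ys (n + 1) ω * ΔW n ω / h) :
    ∀ n < N, ∀ A : Ω → ℝ, Measurable[F n] A → (∃ c : ℝ, ∀ ω, |A ω| ≤ c) →
      (∫ ω, A ω * Ys n ω ∂μ = ∫ ω, A ω * Yd n ω ∂μ) ∧
      (∫ ω, A ω * Zs n ω ∂μ = ∫ ω, A ω * Zd n ω ∂μ) := by
  obtain rfl : F = pastFiltration ΔW hmeas := funext hF
  set ℱ := pastFiltration ΔW hmeas
  have hW2 (i : ℕ) (hi : i < N) : MemLp (ΔW i) 2 μ :=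
    memLp_of_map_eq_gaussianReal (hmeas i) (hlaw ⟨i, hi⟩) ENNReal.ofNat_ne_top
  have hXF : Adapted ℱ X := adapted_euler (a := fun n x => b x (u n) * h)
    (measurable_pastFiltration_succ hmeas)
    (fun n => (measurable_left_of_abs_sub_le hb (u n)).mul_const h) hX0 hXrec
  have hX (n : ℕ) : Measurable (X n) := (hXF n).mono (ℱ.le n) le_rfl
  have hX2 (n : ℕ) (hn : n ≤ N) : MemLp (X n) 2 μ :=
    memLp_euler_s3 (a := fun n x => b x (u n) * h) (K := L * |h|) hX
      (fun n => (measurable_left_of_abs_sub_le hb (u n)).mul_const h)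
      (fun n x => by rw [abs_mul]; nlinarith [hbgrow x (u n), abs_nonneg h]) hW2 hX0 hXrec hn
  have hB (n : ℕ) (_ : n < N) : Measurable[ℱ (n + 1)] fun ω => 1 + h * β (X n ω) (u n) :=
    measurable_const.add (((measurable_left_of_abs_sub_le hβ (u n)).comp
      ((hXF n).mono (ℱ.mono n.le_succ) le_rfl)).const_mul h)
  have hB' (n : ℕ) (hn : n < N) : MemLp (fun ω => 1 + h * β (X n ω) (u n)) ⊤ μ :=
    memLp_top_of_bound ((hB n hn).mono (ℱ.le _) le_rfl).aestronglyMeasurable (1 + |h| * L)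
      (ae_of_all _ fun ω => (abs_add_le _ _).trans (by
        rw [abs_one, abs_mul]; gcongr; exact hβbd _ _))
  have hC (n : ℕ) (hn : n < N) : MemLp (fun ω => h * φ (X n ω) (u n)) 2 μ :=
    ((hX2 n hn.le).comp_of_abs_le_linear
      ((measurable_left_of_abs_sub_le hφ (u n)).comp (hX n)).aestronglyMeasurable
      (hφgrow · (u n))).const_mul h
  have hYN : MemLp (Yd N) 2 μ := hYdN ▸ (hX2 N le_rfl).comp_of_abs_le_linear
    ((LipschitzWith.of_dist_le' hψ).continuous.measurable.comp (hX N)).aestronglyMeasurable hψgrow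
  exact integral_mul_samplewise_eq_and_increment_eq hB hB' hC hYN (hYsN.trans hYdN.symm) hYs hYd
    (measurable_pastFiltration_succ hmeas) hW2 hZs hZd

/-- Weighted unbiasedness of the sample-wise scheme: for every `0 ≤ n ≤ N-1` and every bounded
`ℱ_n`-measurable random variable `A`, `E[A · Y^u_n] = E[A · Y^{N,u}_n]` and
`E[A · Z^u_n] = E[A · Z^{N,u}_n]`. -/
theorem samplewise_scheme_weighted_unbiased
    {Ω : Type*} {mΩ : MeasurableSpace Ω} (μ : Measure Ω) [IsProbabilityMeasure μ]
    (T L : ℝ) (hT : 0 < T) (hL : 0 < L)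
    (N : ℕ) (hN : 1 ≤ N) (h : ℝ) (hh : h = T / N)
    (ΔW : ℕ → Ω → ℝ)
    (hmeas : ∀ i, Measurable (ΔW i))
    (hindep : iIndepFun (fun i : Fin N => ΔW i) μ)
    (hlaw : ∀ i : Fin N, Measure.map (ΔW i) μ = gaussianReal 0 (Real.toNNReal h))
    (F : ℕ → MeasurableSpace Ω)
    (hF : ∀ n, F n = ⨆ i ∈ Finset.range n,
      MeasurableSpace.comap (ΔW i) (inferInstance : MeasurableSpace ℝ))
    (b : ℝ → ℝ → ℝ)
    (hb : ∀ x y u v : ℝ, |b x u - b y v| ≤ L * (|x - y| + |u - v|))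
    (σ : ℝ → ℝ)
    (hσ : ∀ u v : ℝ, |σ u - σ v| ≤ L * |u - v|)
    (β φ : ℝ → ℝ → ℝ) (ψ : ℝ → ℝ)
    (hβ : ∀ x y u v : ℝ, |β x u - β y v| ≤ L * (|x - y| + |u - v|))
    (hφ : ∀ x y u v : ℝ, |φ x u - φ y v| ≤ L * (|x - y| + |u - v|))
    (hψ : ∀ x y : ℝ, |ψ x - ψ y| ≤ L * |x - y|)
    (hβbd : ∀ x u : ℝ, |β x u| ≤ L)
    (hbgrow : ∀ x u : ℝ, |b x u| ≤ L * (1 + |x|))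
    (hφgrow : ∀ x u : ℝ, |φ x u| ≤ L * (1 + |x|))
    (hψgrow : ∀ x : ℝ, |ψ x| ≤ L * (1 + |x|))
    (x₀ : ℝ) (u : ℕ → ℝ) (X : ℕ → Ω → ℝ)
    (hX0 : X 0 = fun _ => x₀)
    (hXrec : ∀ n, X (n + 1) = fun ω => X n ω + b (X n ω) (u n) * h + σ (u n) * ΔW n ω)
    -- discrete BSDE scheme
    (Yd Zd : ℕ → Ω → ℝ)
    (hYdN : Yd N = fun ω => ψ (X N ω))
    (hYd : ∀ n < N, Yd n = fun ω =>
      (μ[fun ω' => (1 + h * β (X n ω') (u n)) * Yd (n + 1) ω' | F n]) ω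
        + h * φ (X n ω) (u n))
    (hZd : ∀ n < N, Zd n = fun ω => (μ[fun ω' => Yd (n + 1) ω' * ΔW n ω' | F n]) ω / h)
    -- sample-wise scheme
    (Ys Zs : ℕ → Ω → ℝ)
    (hYsN : Ys N = fun ω => ψ (X N ω))
    (hYs : ∀ n < N, Ys n = fun ω =>
      (1 + h * β (X n ω) (u n)) * Ys (n + 1) ω + h * φ (X n ω) (u n))
    (hZs : ∀ n < N, Zs n = fun ω => Ys (n + 1) ω * ΔW n ω / h) :
    ∀ n < N, ∀ A : Ω → ℝ, Measurable[F n] A → (∃ c : ℝ, ∀ ω, |A ω| ≤ c) →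
      (∫ ω, A ω * Ys n ω ∂μ = ∫ ω, A ω * Yd n ω ∂μ) ∧
      (∫ ω, A ω * Zs n ω ∂μ = ∫ ω, A ω * Zd n ω ∂μ) :=
  samplewise_scheme_weighted_unbiased_general (mΩ := mΩ) μ L N h ΔW hmeas hlaw F hF b hb σ β φ ψ hβ
    hφ hψ hβbd hbgrow hφgrow hψgrow x₀ u X hX0 hXrec Yd Zd hYdN hYd hZd Ys Zs hYsN hYs hZs
end

section
/- Rate lemma for the stochastic-gradient-descent recursion (the sequence estimate concluding the proof of Theorem standard_new): Let c > 1, M ≥ c, A ≥ 0, B ≥ 0, and let (e_k)_{k ≥ 0} be nonnegative real numbers satisfying e_{k+1} ≤ (1 − c/(k + M)) e_k + A/(k + M)² + B/(k + M) for all k ≥ 0. Then there exists a constant C > 0, depending only on c, such that for all K ≥ 1, e_K ≤ (M/(K + M))^c e_0 + C (A/(K + M) + B). -/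
/-!
The bound `b_k = (M/(k+M))^c e_0 + (A/(k+M) + B)/(c-1)` is a supersolution of the recursion:
with `t = k + M ≥ c`, Bernoulli's inequality gives `1 - c/t ≤ (t/(t+1))^c`, so the factor
`1 - c/t` carries `(M/t)^c` to at most `(M/(t+1))^c`, while the forcing terms `A/t²` and `B/t` are
absorbed with room to spare by the choice of the constant `1/(c-1)`. Since `1 - c/t ≥ 0`, the
recursion is monotone in `e_k`, and induction on `k` gives `e_k ≤ b_k`.
-/

open Real

lemma one_sub_div_le_rpow_div_add_one {c t : ℝ} (hc : 1 ≤ c) (ht : 0 < t) :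
    1 - c / t ≤ (t / (t + 1)) ^ c := by
  have hs : (-1 : ℝ) ≤ -(1 / (t + 1)) := by
    rw [neg_le_neg_iff, div_le_one (by linarith)]
    linarith
  calc 1 - c / t ≤ 1 + c * -(1 / (t + 1)) := by
        have : c / (t + 1) ≤ c / t := div_le_div_of_nonneg_left (by linarith) ht (by linarith)
        linarith [show c * -(1 / (t + 1)) = -(c / (t + 1)) by ring]
    _ ≤ (1 + -(1 / (t + 1))) ^ c := one_add_mul_self_le_rpow_one_add hs hc
    _ = (t / (t + 1)) ^ c := by
        congr 1
        field_simp
        ring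

lemma one_sub_div_mul_rpow_div_le {c t M : ℝ} (hc : 1 ≤ c) (ht : 0 < t) (hM : 0 ≤ M) :
    (1 - c / t) * (M / t) ^ c ≤ (M / (t + 1)) ^ c := by
  have hsplit : (M / (t + 1)) ^ c = (t / (t + 1)) ^ c * (M / t) ^ c := by
    rw [← mul_rpow (by positivity) (by positivity)]
    congr 1
    field_simp
  rw [hsplit]
  exact mul_le_mul_of_nonneg_right (one_sub_div_le_rpow_div_add_one hc ht) (by positivity)

lemma one_sub_div_mul_add_forcing_le {c t A B : ℝ} (hc : 1 < c) (ht : 0 < t)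
    (hA : 0 ≤ A) (hB : 0 ≤ B) :
    (1 - c / t) * ((c - 1)⁻¹ * (A / t + B)) + A / t ^ 2 + B / t
      ≤ (c - 1)⁻¹ * (A / (t + 1) + B) := by
  have hc1 : 0 < c - 1 := by linarith
  have hgap : (c - 1)⁻¹ * (A / (t + 1) + B)
      - ((1 - c / t) * ((c - 1)⁻¹ * (A / t + B)) + A / t ^ 2 + B / t)
      = A / ((c - 1) * t ^ 2 * (t + 1)) + B / ((c - 1) * t) := by
    field_simp
    ring
  have : 0 ≤ A / ((c - 1) * t ^ 2 * (t + 1)) + B / ((c - 1) * t) := by positivity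
  linarith

theorem le_rpow_mul_add_of_le_one_sub_div_mul {c M A B : ℝ} {e : ℕ → ℝ} (hc : 1 < c)
    (hM : c ≤ M) (hA : 0 ≤ A) (hB : 0 ≤ B) (he : 0 ≤ e 0)
    (hrec : ∀ k : ℕ, e (k + 1) ≤ (1 - c / ((k : ℝ) + M)) * e k
      + A / ((k : ℝ) + M) ^ 2 + B / ((k : ℝ) + M)) (K : ℕ) :
    e K ≤ (M / ((K : ℝ) + M)) ^ c * e 0 + (c - 1)⁻¹ * (A / ((K : ℝ) + M) + B) := by
  induction K with
  | zero =>
    have hM0 : M ≠ 0 := by linarith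
    simp only [Nat.cast_zero, zero_add, div_self hM0, one_rpow, one_mul, le_add_iff_nonneg_right]
    have : 0 ≤ A / M := div_nonneg hA (by linarith)
    have : 0 ≤ (c - 1)⁻¹ := inv_nonneg.mpr (by linarith)
    positivity
  | succ K ih =>
    set t : ℝ := (K : ℝ) + M with ht
    have hct : c ≤ t := by linarith [(K.cast_nonneg : (0 : ℝ) ≤ K)]
    have ht0 : 0 < t := by linarith
    have hfac : 0 ≤ 1 - c / t := by rw [sub_nonneg, div_le_one ht0]; exact hct
    have hcast : ((K + 1 : ℕ) : ℝ) + M = t + 1 := by push_cast; ring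
    rw [hcast]
    calc e (K + 1) ≤ (1 - c / t) * e K + A / t ^ 2 + B / t := hrec K
      _ ≤ (1 - c / t) * ((M / t) ^ c * e 0 + (c - 1)⁻¹ * (A / t + B)) + A / t ^ 2 + B / t := by
          gcongr
      _ = (1 - c / t) * (M / t) ^ c * e 0
          + ((1 - c / t) * ((c - 1)⁻¹ * (A / t + B)) + A / t ^ 2 + B / t) := by ring
      _ ≤ (M / (t + 1)) ^ c * e 0 + (c - 1)⁻¹ * (A / (t + 1) + B) := by
          gcongr
          · exact one_sub_div_mul_rpow_div_le hc.le ht0 (by linarith)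
          · exact one_sub_div_mul_add_forcing_le hc ht0 hA hB

/-- Rate lemma for the stochastic-gradient-descent recursion: if `c > 1`, `M ≥ c`, and
`e_{k+1} ≤ (1 - c/(k+M)) e_k + A/(k+M)² + B/(k+M)`, then there is a constant `C > 0`
depending only on `c` such that `e_K ≤ (M/(K+M))^c e_0 + C (A/(K+M) + B)` for all `K ≥ 1`. -/
theorem sgd_rate_lemma (c : ℝ) (hc : 1 < c) :
    ∃ C > 0, ∀ (M A B : ℝ), c ≤ M → 0 ≤ A → 0 ≤ B →
      ∀ e : ℕ → ℝ, (∀ k, 0 ≤ e k) →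
      (∀ k : ℕ, e (k + 1) ≤ (1 - c / ((k : ℝ) + M)) * e k
        + A / ((k : ℝ) + M) ^ 2 + B / ((k : ℝ) + M)) →
      ∀ K : ℕ, 1 ≤ K →
        e K ≤ (M / ((K : ℝ) + M)) ^ c * e 0 + C * (A / ((K : ℝ) + M) + B) :=
  ⟨(c - 1)⁻¹, inv_pos.mpr (by linarith), fun _ _ _ hM hA hB _ he hrec K _ =>
    le_rpow_mul_add_of_le_one_sub_div_mul hc hM hA hB (he 0) hrec K⟩
end

section
/- Abstract convergence of batch stochastic gradient descent with a biased gradient oracle (the convergence argument of Theorem standard_new): Let H be a real Hilbert space and J : H → ℝ Fréchet differentiable with gradient ∇J satisfying, for some λ > 0 and C_L > 0: ⟨∇J(v) − ∇J(w), v − w⟩ ≥ λ‖v − w‖² and ‖∇J(v) − ∇J(w)‖ ≤ C_L‖v − w‖ for all v, w ∈ H, and let u* ∈ H satisfy ∇J(u*) = 0. Let ε ≥ 0 and let G : H → H satisfy ‖G(u) − ∇J(u)‖ ≤ ε for all u ∈ H. On a probability space (Ω, ℱ, ℙ) with a filtration (𝒢_k)_{k ≥ 0} such that 𝒢_0 is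 trivial, let (g_k)_{k ≥ 0} be H-valued square-integrable random variables with g_k measurable with respect to 𝒢_{k+1}, and define u^0 ∈ H deterministic and u^{k+1} = u^k − η_k g_k, where η_k = θ/(k + M) with θ > 0 and M ≥ 1 chosen so that λθ − 4 C_L θ²/(1 + M) > 2 and θ λ/M ≤ 1. Assume that for every k, almost surely E[g_k | 𝒢_k] = G(u^k) and E[‖g_k − G(u^k)‖² | 𝒢_k] ≤ V for a constant V ≥ 0 (note u^k is 𝒢_k-measurable). Then there exists a constant C > 0, depending only on λ, C_L, θ, M, V and ‖u^0 − u*‖, such that for all K ≥ 1, E[‖u^K − u*‖²] ≤ C (1/K + ε²). -/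
/-!
Let `a_k = E‖u^k - u*‖²`. The noise `g_k - G(u^k)` has zero conditional mean given `𝒢_k`, so it is
orthogonal in `L²` to every square-integrable `𝒢_k`-measurable function, and
`a_{k+1} = E‖u^k - u* - η_k G(u^k)‖² + η_k² E‖g_k - G(u^k)‖²`. Strong monotonicity, the Lipschitz
bound and `‖G - ∇J‖ ≤ ε` bound the first term by `(1 - 3/2 λη_k + 2C_L²η_k²) a_k + O(η_k ε²)`; the
second is at most `η_k² V`. Up to the first `k₀` with `4C_L²η_{k₀} ≤ λ` this only gives geometric
growth. From `k₀` on, `a_{k+1} ≤ (1 - λθ/(k+M)) a_k + θ/(k+M) · O(ε²) + θ²V/(k+M)²`, and because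
`λθ > 1` the bound `a_k ≤ A/(k+M) + s ε²` propagates by induction (Chung's lemma).
-/

open MeasureTheory ProbabilityTheory RealInnerProductSpace

lemma le_pow_mul_add_of_le_mul_add {a : ℕ → ℝ} {q r : ℝ} (hq : 1 ≤ q) (hr : 0 ≤ r)
    (ha : 0 ≤ a 0) (h : ∀ k, a (k + 1) ≤ q * a k + r) {k n : ℕ} (hkn : k ≤ n) :
    a k ≤ q ^ n * (a 0 + n * r) := by
  have hk : ∀ k, a k ≤ q ^ k * (a 0 + k * r) := by
    intro k
    induction k with
    | zero => simp
    | succ k ih =>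
      calc a (k + 1) ≤ q * (q ^ k * (a 0 + k * r)) + q ^ (k + 1) * r := by
            refine (h k).trans (add_le_add ?_ (le_mul_of_one_le_left hr (one_le_pow₀ hq)))
            gcongr
        _ = q ^ (k + 1) * (a 0 + (k + 1 : ℕ) * r) := by push_cast; ring
  exact (hk k).trans (by gcongr)

lemma one_sub_div_mul_add_div_sq_le {n c D A x : ℝ} (hc : 1 ≤ c) (hcn : c ≤ n) (hA : 0 ≤ A)
    (hDA : D ≤ (c - 1) * A) (hx : x ≤ A / n) :
    (1 - c / n) * x + D / n ^ 2 ≤ A / (n + 1) := by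
  have hn : 0 < n := by linarith
  calc (1 - c / n) * x + D / n ^ 2 ≤ (1 - c / n) * (A / n) + (c - 1) * A / n ^ 2 := by
        gcongr
        rwa [sub_nonneg, div_le_one hn]
    _ = A * (n - 1) / n ^ 2 := by field_simp; ring
    _ ≤ A / (n + 1) := by
        rw [div_le_div_iff₀ (by positivity) (by positivity)]
        nlinarith [mul_nonneg hA (sq_nonneg n)]

lemma le_div_add_of_le_one_sub_mul_add {a : ℕ → ℝ} {k₀ : ℕ} {lam θ M b s V A : ℝ}
    (hlam : 0 < lam) (hlamθ : 1 ≤ lam * θ) (hlamθM : lam * θ ≤ k₀ + M) (hA : 0 ≤ A)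
    (hVA : θ ^ 2 * V ≤ (lam * θ - 1) * A) (hbs : b ≤ lam * s)
    (hrec : ∀ k ≥ k₀, a (k + 1)
      ≤ (1 - lam * (θ / (k + M))) * a k + θ / (k + M) * b + (θ / (k + M)) ^ 2 * V)
    (h₀ : a k₀ ≤ A / (k₀ + M) + s) {k : ℕ} (hk : k₀ ≤ k) :
    a k ≤ A / (k + M) + s := by
  induction k, hk using Nat.le_induction with
  | base => exact h₀
  | succ k hk ih =>
    have hn : lam * θ ≤ k + M := hlamθM.trans (by gcongr)
    have hη : 0 ≤ θ / (k + M) := div_nonneg (by nlinarith) (by linarith)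
    have hstep := one_sub_div_mul_add_div_sq_le hlamθ hn hA hVA (x := a k - s) (by linarith)
    have hshift : (1 - lam * (θ / (k + M))) * a k + θ / (k + M) * (lam * s) + (θ / (k + M)) ^ 2 * V
        = (1 - lam * θ / (k + M)) * (a k - s) + θ ^ 2 * V / (k + M) ^ 2 + s := by
      field_simp; ring
    have hcast : ((k + 1 : ℕ) : ℝ) + M = (k + M) + 1 := by push_cast; ring
    rw [hcast]
    linarith [hrec k hk, mul_le_mul_of_nonneg_left hbs hη]

lemma le_pow_mul_add_mul_one_add_sq {a : ℕ → ℝ} {q r θ M V ε : ℝ} (hq : 1 ≤ q) (hr : 0 ≤ r)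
    (hθ : 0 ≤ θ) (hM : 1 ≤ M) (hV : 0 ≤ V) (ha : 0 ≤ a 0)
    (h : ∀ k, a (k + 1) ≤ q * a k + r * ε ^ 2 + (θ / (k + M)) ^ 2 * V) {k n : ℕ} (hkn : k ≤ n) :
    a k ≤ q ^ n * (a 0 + n * (θ ^ 2 * V + r)) * (1 + ε ^ 2) := by
  have hε : 0 ≤ ε ^ 2 := sq_nonneg ε
  have hunif (k : ℕ) : a (k + 1) ≤ q * a k + (θ ^ 2 * V + r) * (1 + ε ^ 2) := by
    have hη : (θ / (k + M)) ^ 2 * V ≤ θ ^ 2 * V := by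
      gcongr
      exact div_le_self hθ (by linarith [(Nat.cast_nonneg k : (0 : ℝ) ≤ k)])
    linarith [h k, mul_nonneg (mul_nonneg (sq_nonneg θ) hV) hε, mul_nonneg hr hε]
  refine (le_pow_mul_add_of_le_mul_add hq (by positivity) ha hunif hkn).trans ?_
  nlinarith [pow_nonneg (zero_le_one.trans hq) n, mul_nonneg ha hε]

theorem exists_rate_of_sgd_recursion {lam θ M q r b V a₀ : ℝ} (k₀ : ℕ) (hlam : 0 < lam)
    (hlamθ : 2 ≤ lam * θ) (hlamθM : lam * θ ≤ M) (hq : 1 ≤ q) (hr : 0 ≤ r) (hb : 0 ≤ b)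
    (hV : 0 ≤ V) (ha₀ : 0 ≤ a₀) :
    ∃ C > 0, ∀ ε : ℝ, ∀ a : ℕ → ℝ, a 0 = a₀ →
      (∀ k, a (k + 1) ≤ q * a k + r * ε ^ 2 + (θ / (k + M)) ^ 2 * V) →
      (∀ k ≥ k₀, a (k + 1) ≤ (1 - lam * (θ / (k + M))) * a k + θ / (k + M) * (b * ε ^ 2)
        + (θ / (k + M)) ^ 2 * V) →
      ∀ K : ℕ, 1 ≤ K → a K ≤ C * (1 / K + ε ^ 2) := by
  set W := q ^ k₀ * (a₀ + k₀ * (θ ^ 2 * V + r))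
  set A := (k₀ + M) * W + θ ^ 2 * V
  set C := k₀ * W + A + (b / lam + W) + 1
  have hM : 0 < M := by linarith
  have hθ : 0 < θ := pos_of_mul_pos_right (by linarith : 0 < lam * θ) hlam.le
  have hW : 0 ≤ W := by positivity
  have hA : 0 ≤ A := by positivity
  have hWA : (k₀ + M) * W ≤ A := le_add_of_nonneg_right (by positivity)
  have hk₀W : 0 ≤ k₀ * W := by positivity
  have hb' : 0 ≤ b / lam := by positivity
  refine ⟨C, by positivity, fun ε a ha0 hcrude hcontr K hK => ?_⟩
  have hε : 0 ≤ ε ^ 2 := sq_nonneg ε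
  have hearly {k : ℕ} (hk : k ≤ k₀) : a k ≤ W + W * ε ^ 2 := by
    have := le_pow_mul_add_mul_one_add_sq hq hr hθ.le (by linarith) hV (ha0 ▸ ha₀) hcrude hk
    rw [ha0] at this
    linarith
  -- the `W ε²` in the shift absorbs the `ε²`-part of the bound at `k₀`
  have hlate {k : ℕ} (hk : k₀ ≤ k) : a k ≤ A / (k + M) + (b / lam + W) * ε ^ 2 := by
    refine le_div_add_of_le_one_sub_mul_add hlam (by linarith)
      (by linarith [(Nat.cast_nonneg k₀ : (0 : ℝ) ≤ k₀)]) hA (by nlinarith) ?_ hcontr ?_ hk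
    · have hsplit : lam * ((b / lam + W) * ε ^ 2) = b * ε ^ 2 + lam * W * ε ^ 2 := by field_simp
      nlinarith [mul_nonneg (mul_nonneg hlam.le hW) hε]
    · have : W ≤ A / (k₀ + M) := by rwa [le_div_iff₀ (by positivity), mul_comm]
      nlinarith [hearly le_rfl]
  have hK0 : (0 : ℝ) < K := by exact_mod_cast hK
  rcases le_or_gt k₀ K with hKk | hKk
  · calc a K ≤ A / (K + M) + (b / lam + W) * ε ^ 2 := hlate hKk
      _ ≤ C / K + C * ε ^ 2 := by
        gcongr ?_ + ?_ * _
        · exact div_le_div₀ (by positivity) (by linarith) hK0 (by linarith)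
        · linarith
      _ = _ := by ring
  · have hKk' : (K : ℝ) ≤ k₀ := by exact_mod_cast hKk.le
    calc a K ≤ W + W * ε ^ 2 := hearly hKk.le
      _ ≤ C / K + C * ε ^ 2 := by
        gcongr ?_ + ?_ * _
        · rw [le_div_iff₀ hK0]
          nlinarith [mul_le_mul_of_nonneg_left hKk' hW]
        · linarith
      _ = _ := by ring

section OracleStep

variable {H : Type*} [NormedAddCommGroup H] [InnerProductSpace ℝ H]

lemma norm_sub_smul_sq_le {d f g : H} {lam CL ε η : ℝ} (hlam : 0 < lam) (hη : 0 ≤ η)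
    (hmono : lam * ‖d‖ ^ 2 ≤ ⟪f, d⟫) (hlip : ‖f‖ ≤ CL * ‖d‖) (hgf : ‖g - f‖ ≤ ε) :
    ‖d - η • g‖ ^ 2
      ≤ (1 - 3 / 2 * lam * η + 2 * CL ^ 2 * η ^ 2) * ‖d‖ ^ 2 + 2 * η * (1 / lam + η) * ε ^ 2 := by
  have hexpand : ‖d - η • g‖ ^ 2 = ‖d‖ ^ 2 - 2 * η * ⟪g, d⟫ + η ^ 2 * ‖g‖ ^ 2 := by
    rw [norm_sub_sq_real, real_inner_smul_right, real_inner_comm, norm_smul, Real.norm_eq_abs,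
      mul_pow, sq_abs]
    ring
  have hinner : 3 / 4 * lam * ‖d‖ ^ 2 - ε ^ 2 / lam ≤ ⟪g, d⟫ := by
    have hbias : -(ε * ‖d‖) ≤ ⟪g - f, d⟫ := by
      linarith [abs_real_inner_le_norm (g - f) d, neg_abs_le ⟪g - f, d⟫,
        mul_le_mul_of_nonneg_right hgf (norm_nonneg d)]
    have hamgm : ε * ‖d‖ ≤ lam / 4 * ‖d‖ ^ 2 + ε ^ 2 / lam := by
      rw [← sub_nonneg]
      have : lam / 4 * ‖d‖ ^ 2 + ε ^ 2 / lam - ε * ‖d‖ = (lam * ‖d‖ - 2 * ε) ^ 2 / (4 * lam) := by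
        field_simp; ring
      rw [this]; positivity
    rw [show g = f + (g - f) by abel, inner_add_left]
    linarith
  have hnorm : ‖g‖ ^ 2 ≤ 2 * CL ^ 2 * ‖d‖ ^ 2 + 2 * ε ^ 2 := by
    have : ‖g‖ ≤ CL * ‖d‖ + ε := by
      calc ‖g‖ = ‖f + (g - f)‖ := by rw [add_sub_cancel]
        _ ≤ ‖f‖ + ‖g - f‖ := norm_add_le _ _
        _ ≤ CL * ‖d‖ + ε := add_le_add hlip hgf
    nlinarith [norm_nonneg g, sq_nonneg (CL * ‖d‖ - ε)]
  rw [hexpand]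
  linear_combination (2 * η) * hinner + η ^ 2 * hnorm

lemma norm_sub_div_smul_sq_le_one_add {d f g : H} {lam CL ε θ n : ℝ} (hlam : 0 < lam)
    (hθ : 0 ≤ θ) (hn : 1 ≤ n) (hmono : lam * ‖d‖ ^ 2 ≤ ⟪f, d⟫) (hlip : ‖f‖ ≤ CL * ‖d‖)
    (hgf : ‖g - f‖ ≤ ε) :
    ‖d - (θ / n) • g‖ ^ 2 ≤ (1 + 2 * CL ^ 2 * θ ^ 2) * ‖d‖ ^ 2 + 2 * θ * (1 / lam + θ) * ε ^ 2 := by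
  have hη : 0 ≤ θ / n := div_nonneg hθ (by linarith)
  have hηθ : θ / n ≤ θ := div_le_self hθ hn
  refine (norm_sub_smul_sq_le hlam hη hmono hlip hgf).trans ?_
  gcongr
  nlinarith [mul_nonneg hlam.le hη]

lemma norm_sub_div_smul_sq_le_one_sub {d f g : H} {lam CL ε θ n : ℝ} (hlam : 0 < lam)
    (hθ : 0 ≤ θ) (hn : 1 ≤ n) (hCLn : 4 * CL ^ 2 * θ ≤ lam * n) (hmono : lam * ‖d‖ ^ 2 ≤ ⟪f, d⟫)
    (hlip : ‖f‖ ≤ CL * ‖d‖) (hgf : ‖g - f‖ ≤ ε) :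
    ‖d - (θ / n) • g‖ ^ 2
      ≤ (1 - lam * (θ / n)) * ‖d‖ ^ 2 + θ / n * (2 * (1 / lam + θ) * ε ^ 2) := by
  have hη : 0 ≤ θ / n := div_nonneg hθ (by linarith)
  have hηθ : θ / n ≤ θ := div_le_self hθ hn
  have hηCL : 4 * CL ^ 2 * (θ / n) ≤ lam := by
    rw [mul_div_assoc', div_le_iff₀ (by linarith)]
    exact hCLn
  refine (norm_sub_smul_sq_le hlam hη hmono hlip hgf).trans ?_
  gcongr ?_ * _ + ?_
  · nlinarith [mul_le_mul_of_nonneg_left hηCL hη]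
  · nlinarith [sq_nonneg ε, mul_nonneg hη (sq_nonneg ε)]

end OracleStep

section Conditioning

variable {Ω H : Type*} {m m0 : MeasurableSpace Ω} {μ : Measure Ω}

lemma integral_le_of_ae_condExp_le [IsProbabilityMeasure μ] (hm : m ≤ m0) {f : Ω → ℝ} {V : ℝ}
    (hf : ∀ᵐ ω ∂μ, μ[f|m] ω ≤ V) : ∫ ω, f ω ∂μ ≤ V := by
  rw [← integral_condExp hm]
  simpa using integral_mono_ae integrable_condExp (integrable_const V) hf

variable [NormedAddCommGroup H] [InnerProductSpace ℝ H]

lemma MeasureTheory.MemLp.integrable_inner {f g : Ω → H} (hf : MemLp f 2 μ) (hg : MemLp g 2 μ) :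
    Integrable (fun ω => ⟪f ω, g ω⟫) μ := by
  refine (L2.integrable_inner (𝕜 := ℝ) (hf.toLp f) (hg.toLp g)).congr ?_
  filter_upwards [hf.coeFn_toLp, hg.coeFn_toLp] with ω hfω hgω
  rw [hfω, hgω]

variable [CompleteSpace H]

lemma integral_inner_eq_zero_of_condExp_eq_zero [IsFiniteMeasure μ] (hm : m ≤ m0) {h X : Ω → H}
    (hh : MemLp h 2 μ) (hX : MemLp X 2 μ) (hXm : AEStronglyMeasurable[m] X μ)
    (h0 : μ[h|m] =ᵐ[μ] 0) : ∫ ω, ⟪X ω, h ω⟫ ∂μ = 0 := by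
  have hXm' : AEStronglyMeasurable[m] (hX.toLp X : Ω → H) μ := hXm.congr hX.coeFn_toLp.symm
  calc ∫ ω, ⟪X ω, h ω⟫ ∂μ = ⟪hh.toLp h, hX.toLp X⟫ := by
        rw [L2.inner_def]
        refine integral_congr_ae ?_
        filter_upwards [hh.coeFn_toLp, hX.coeFn_toLp] with ω hhω hXω
        rw [hhω, hXω, real_inner_comm]
    _ = ⟪(condExpL2 H ℝ hm (hh.toLp h) : Lp H 2 μ), hX.toLp X⟫ :=
        (inner_condExpL2_eq_inner_fun hm _ _ hXm').symm
    _ = 0 := by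
        rw [L2.inner_def]
        refine integral_eq_zero_of_ae ?_
        filter_upwards [(hh.condExpL2_ae_eq_condExp (𝕜 := ℝ) hm).trans h0] with ω hω
        simp [hω]

lemma integral_norm_add_sq_of_condExp_eq_zero [IsFiniteMeasure μ] (hm : m ≤ m0) {Z h : Ω → H}
    (hZ : MemLp Z 2 μ) (hZm : AEStronglyMeasurable[m] Z μ) (hh : MemLp h 2 μ)
    (h0 : μ[h|m] =ᵐ[μ] 0) :
    ∫ ω, ‖Z ω + h ω‖ ^ 2 ∂μ = ∫ ω, ‖Z ω‖ ^ 2 ∂μ + ∫ ω, ‖h ω‖ ^ 2 ∂μ := by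
  have hZ2 := hZ.integrable_norm_pow two_ne_zero
  have hcross := (hZ.integrable_inner hh).const_mul 2
  have hsum : Integrable (fun ω => ‖Z ω‖ ^ 2 + 2 * ⟪Z ω, h ω⟫) μ := hZ2.add hcross
  simp_rw [norm_add_sq_real]
  rw [integral_add hsum (hh.integrable_norm_pow two_ne_zero), integral_add hZ2 hcross,
    integral_const_mul, integral_inner_eq_zero_of_condExp_eq_zero hm hh hZ hZm h0, mul_zero,
    add_zero]

lemma integral_norm_sub_smul_sub_sq_le [IsProbabilityMeasure μ] (hm : m ≤ m0) {X g : Ω → H}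
    {G : H → H} {c : H} {η ρ β V : ℝ} (hXm : StronglyMeasurable[m] X) (hX : MemLp X 2 μ)
    (hg : MemLp g 2 μ) (hunb : μ[g|m] =ᵐ[μ] fun ω => G (X ω))
    (hvar : ∀ᵐ ω ∂μ, μ[fun ω => ‖g ω - G (X ω)‖ ^ 2 | m] ω ≤ V)
    (hstep : ∀ u, ‖u - c - η • G u‖ ^ 2 ≤ ρ * ‖u - c‖ ^ 2 + β) :
    ∫ ω, ‖X ω - η • g ω - c‖ ^ 2 ∂μ ≤ ρ * ∫ ω, ‖X ω - c‖ ^ 2 ∂μ + β + η ^ 2 * V := by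
  set Y := fun ω => G (X ω)
  have hYm : AEStronglyMeasurable[m] Y μ :=
    stronglyMeasurable_condExp.aestronglyMeasurable.congr hunb
  have hY : MemLp Y 2 μ := (hg.condExp one_le_two).ae_eq hunb
  have hXc : MemLp (fun ω => X ω - c) 2 μ := hX.sub (memLp_const c)
  have hZ : MemLp (fun ω => X ω - c - η • Y ω) 2 μ := hXc.sub (hY.const_smul η)
  have hnoise : μ[fun ω => η • (Y ω - g ω) | m] =ᵐ[μ] 0 := by
    change μ[η • (Y - g) | m] =ᵐ[μ] 0
    filter_upwards [condExp_smul (m := m) (μ := μ) η (Y - g),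
      condExp_sub (m := m) (hY.integrable one_le_two) (hg.integrable one_le_two),
      condExp_of_aestronglyMeasurable' hm hYm (hY.integrable one_le_two), hunb] with ω h1 h2 h3 h4
    simp_all
  calc ∫ ω, ‖X ω - η • g ω - c‖ ^ 2 ∂μ
      = ∫ ω, ‖(X ω - c - η • Y ω) + η • (Y ω - g ω)‖ ^ 2 ∂μ := by
        congr 1 with ω; congr 2; module
    _ = ∫ ω, ‖X ω - c - η • Y ω‖ ^ 2 ∂μ + η ^ 2 * ∫ ω, ‖g ω - Y ω‖ ^ 2 ∂μ := by
        rw [integral_norm_add_sq_of_condExp_eq_zero (h := fun ω => η • (Y ω - g ω)) hm hZ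
          ((hXm.aestronglyMeasurable.sub aestronglyMeasurable_const).sub (hYm.const_smul η))
          ((hY.sub hg).const_smul η) hnoise, ← integral_const_mul]
        simp_rw [norm_smul, mul_pow, Real.norm_eq_abs, sq_abs, norm_sub_rev (Y _)]
    _ ≤ ρ * ∫ ω, ‖X ω - c‖ ^ 2 ∂μ + β + η ^ 2 * V := by
        gcongr
        · calc ∫ ω, ‖X ω - c - η • Y ω‖ ^ 2 ∂μ ≤ ∫ ω, (ρ * ‖X ω - c‖ ^ 2 + β) ∂μ :=
                integral_mono (hZ.integrable_norm_pow two_ne_zero)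
                  (((hXc.integrable_norm_pow two_ne_zero).const_mul ρ).add (integrable_const β))
                  fun ω => hstep (X ω)
            _ = ρ * ∫ ω, ‖X ω - c‖ ^ 2 ∂μ + β := by
                rw [integral_add ((hXc.integrable_norm_pow two_ne_zero).const_mul ρ)
                  (integrable_const β), integral_const_mul]
                simp
        · exact integral_le_of_ae_condExp_le hm hvar

end Conditioning

section Iterates

variable {Ω H : Type*} [NormedAddCommGroup H] [NormedSpace ℝ H] {mΩ : MeasurableSpace Ω}
  {U g : ℕ → Ω → H} {η : ℕ → ℝ} {u0 : H}

lemma stronglyAdapted_of_eq_sub_smul {𝒢 : Filtration ℕ mΩ} (hU0 : U 0 = fun _ => u0)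
    (hUrec : ∀ k, U (k + 1) = fun ω => U k ω - η k • g k ω)
    (hg : ∀ k, StronglyMeasurable[𝒢 (k + 1)] (g k)) : StronglyAdapted 𝒢 U := by
  intro k
  induction k with
  | zero => rw [hU0]; exact stronglyMeasurable_const
  | succ k ih => rw [hUrec k]; exact (ih.mono (𝒢.mono k.le_succ)).sub ((hg k).const_smul _)

lemma memLp_of_eq_sub_smul {μ : Measure Ω} [IsFiniteMeasure μ] (hU0 : U 0 = fun _ => u0)
    (hUrec : ∀ k, U (k + 1) = fun ω => U k ω - η k • g k ω) (hg : ∀ k, MemLp (g k) 2 μ) (k : ℕ) :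
    MemLp (U k) 2 μ := by
  induction k with
  | zero => rw [hU0]; exact memLp_const u0
  | succ k ih => rw [hUrec k]; exact ih.sub ((hg k).const_smul _)

end Iterates

theorem batch_sgd_convergence_general
    {H : Type} [NormedAddCommGroup H] [InnerProductSpace ℝ H] [CompleteSpace H]
    (gradJ : H → H)
    (lam CL : ℝ) (hlam : 0 < lam) (hCL : 0 < CL)
    (hmono : ∀ v w : H, lam * ‖v - w‖ ^ 2 ≤ ⟪gradJ v - gradJ w, v - w⟫)
    (hlip : ∀ v w : H, ‖gradJ v - gradJ w‖ ≤ CL * ‖v - w‖)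
    (ustar : H) (hcrit : gradJ ustar = 0)
    (θ M : ℝ) (hθ : 0 < θ) (hM : 1 ≤ M)
    (hstep : 2 < lam * θ - 4 * CL * θ ^ 2 / (1 + M))
    (hstep' : θ * lam / M ≤ 1)
    (V : ℝ) (hV : 0 ≤ V) (u0 : H) :
    ∃ C > 0, ∀ ε : ℝ, 0 ≤ ε →
      ∀ G : H → H, (∀ u : H, ‖G u - gradJ u‖ ≤ ε) →
      ∀ (Ω : Type) (mΩ : MeasurableSpace Ω) (μ : Measure Ω),
        IsProbabilityMeasure μ →
      ∀ 𝒢 : Filtration ℕ mΩ, 𝒢 0 = ⊥ →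
      ∀ g : ℕ → Ω → H,
        (∀ k, MemLp (g k) 2 μ) →
        (∀ k, StronglyMeasurable[𝒢 (k + 1)] (g k)) →
      ∀ U : ℕ → Ω → H,
        (U 0 = fun _ => u0) →
        (∀ k, U (k + 1) = fun ω => U k ω - (θ / ((k : ℝ) + M)) • g k ω) →
        (∀ k, μ[g k | 𝒢 k] =ᵐ[μ] fun ω => G (U k ω)) →
        (∀ k, ∀ᵐ ω ∂μ, (μ[fun ω' => ‖g k ω' - G (U k ω')‖ ^ 2 | 𝒢 k]) ω ≤ V) →
      ∀ K : ℕ, 1 ≤ K →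
        ∫ ω, ‖U K ω - ustar‖ ^ 2 ∂μ ≤ C * (1 / (K : ℝ) + ε ^ 2) := by
  have hlamθ : 2 ≤ lam * θ := by linarith [(by positivity : 0 ≤ 4 * CL * θ ^ 2 / (1 + M))]
  have hlamθM : lam * θ ≤ M := by rwa [div_le_one (by linarith), mul_comm] at hstep'
  obtain ⟨C, hC, hrate⟩ := exists_rate_of_sgd_recursion ⌈4 * CL ^ 2 * θ / lam⌉₊ hlam hlamθ hlamθM
    (q := 1 + 2 * CL ^ 2 * θ ^ 2) (r := 2 * θ * (1 / lam + θ)) (b := 2 * (1 / lam + θ))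
    (by nlinarith [sq_nonneg (CL * θ)]) (by positivity) (by positivity) hV (sq_nonneg ‖u0 - ustar‖)
  refine ⟨C, hC, fun ε _ G hG Ω mΩ μ _ 𝒢 _ g hg2 hgm U hU0 hUrec hunb hvar K hK => ?_⟩
  have hmono' (u : H) : lam * ‖u - ustar‖ ^ 2 ≤ ⟪gradJ u, u - ustar⟫ := by
    simpa [hcrit] using hmono u ustar
  have hlip' (u : H) : ‖gradJ u‖ ≤ CL * ‖u - ustar‖ := by simpa [hcrit] using hlip u ustar
  have hkM (k : ℕ) : 1 ≤ (k : ℝ) + M := by linarith [(Nat.cast_nonneg k : (0 : ℝ) ≤ k)]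
  have hrec (k : ℕ) {ρ β : ℝ}
      (hρ : ∀ u, ‖u - ustar - (θ / (k + M)) • G u‖ ^ 2 ≤ ρ * ‖u - ustar‖ ^ 2 + β) :
      ∫ ω, ‖U (k + 1) ω - ustar‖ ^ 2 ∂μ
        ≤ ρ * ∫ ω, ‖U k ω - ustar‖ ^ 2 ∂μ + β + (θ / (k + M)) ^ 2 * V := by
    rw [hUrec k]
    exact integral_norm_sub_smul_sub_sq_le (𝒢.le k) (stronglyAdapted_of_eq_sub_smul hU0 hUrec hgm k)
      (memLp_of_eq_sub_smul hU0 hUrec hg2 k) (hg2 k) (hunb k) (hvar k) hρ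
  refine hrate ε (fun k => ∫ ω, ‖U k ω - ustar‖ ^ 2 ∂μ) (by simp [hU0])
    (fun k => hrec k fun u => norm_sub_div_smul_sq_le_one_add hlam hθ.le (hkM k) (hmono' u)
      (hlip' u) (hG u)) (fun k hk => hrec k fun u => ?_) K hK
  have hk' : 4 * CL ^ 2 * θ ≤ lam * (k + M) := by
    have : (⌈4 * CL ^ 2 * θ / lam⌉₊ : ℝ) ≤ k := by exact_mod_cast hk
    rw [← div_le_iff₀' hlam]
    linarith [Nat.le_ceil (4 * CL ^ 2 * θ / lam)]
  exact norm_sub_div_smul_sq_le_one_sub hlam hθ.le (hkM k) hk' (hmono' u) (hlip' u) (hG u)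

/-- Abstract convergence of batch stochastic gradient descent with a biased gradient oracle:
under strong monotonicity and Lipschitz continuity of the gradient, a uniformly `ε`-biased
oracle `G`, conditionally unbiased noisy gradient samples with conditional variance at most `V`,
and step sizes `η_k = θ/(k+M)` with `λθ - 4C_Lθ²/(1+M) > 2` and `θλ/M ≤ 1`, the iterates
satisfy `E[‖u^K - u*‖²] ≤ C (1/K + ε²)` for all `K ≥ 1`. -/
theorem batch_sgd_convergence
    {H : Type} [NormedAddCommGroup H] [InnerProductSpace ℝ H] [CompleteSpace H]
    (J : H → ℝ) (gradJ : H → H) (hgrad : ∀ w, HasGradientAt J (gradJ w) w)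
    (lam CL : ℝ) (hlam : 0 < lam) (hCL : 0 < CL)
    (hmono : ∀ v w : H, lam * ‖v - w‖ ^ 2 ≤ ⟪gradJ v - gradJ w, v - w⟫)
    (hlip : ∀ v w : H, ‖gradJ v - gradJ w‖ ≤ CL * ‖v - w‖)
    (ustar : H) (hcrit : gradJ ustar = 0)
    (θ M : ℝ) (hθ : 0 < θ) (hM : 1 ≤ M)
    (hstep : 2 < lam * θ - 4 * CL * θ ^ 2 / (1 + M))
    (hstep' : θ * lam / M ≤ 1)
    (V : ℝ) (hV : 0 ≤ V) (u0 : H) :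
    ∃ C > 0, ∀ ε : ℝ, 0 ≤ ε →
      ∀ G : H → H, (∀ u : H, ‖G u - gradJ u‖ ≤ ε) →
      ∀ (Ω : Type) (mΩ : MeasurableSpace Ω) (μ : Measure Ω),
        IsProbabilityMeasure μ →
      ∀ 𝒢 : Filtration ℕ mΩ, 𝒢 0 = ⊥ →
      ∀ g : ℕ → Ω → H,
        (∀ k, MemLp (g k) 2 μ) →
        (∀ k, StronglyMeasurable[𝒢 (k + 1)] (g k)) →
      ∀ U : ℕ → Ω → H,
        (U 0 = fun _ => u0) →
        (∀ k, U (k + 1) = fun ω => U k ω - (θ / ((k : ℝ) + M)) • g k ω) →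
        (∀ k, μ[g k | 𝒢 k] =ᵐ[μ] fun ω => G (U k ω)) →
        (∀ k, ∀ᵐ ω ∂μ, (μ[fun ω' => ‖g k ω' - G (U k ω')‖ ^ 2 | 𝒢 k]) ω ≤ V) →
      ∀ K : ℕ, 1 ≤ K →
        ∫ ω, ‖U K ω - ustar‖ ^ 2 ∂μ ≤ C * (1 / (K : ℝ) + ε ^ 2) :=
  batch_sgd_convergence_general gradJ lam CL hlam hCL hmono hlip ustar hcrit θ M hθ hM hstep hstep'
    V hV u0
end
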